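/- Lower bound for best-arm identification: There exists an absolute constant c > 0 with the following property. For every number of arms K ≥ 2, every ε ∈ (0, 1/2), every time horizon T ≤ cK/ε², and every deterministic bandit algorithm with prediction (A, y), there exist at least ⌈K/3⌉ arms a ∈ [K] such that, under problem instance I_a(ε), the probability that the algorithm's prediction equals a is less than 3/4, i.e., Pr[y(r_1,...,r_T) = a] < 3/4. -/

import Mathlib

/-- The probability that a deterministic bandit algorithm `A` (with 0/1 rewards and `K` arms),
run on the mean-reward vector `μ`, observes the reward sequence `r : Fin T → Bool`:
conditionally on the first `t-1` rewards, the reward in round `t` equals `1` with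
probability `μ a_t`, where `a_t = A t (prefix of r)`. -/
noncomputable def seqProb {K T : ℕ} (A : (t : Fin T) → (Fin t.1 → Bool) → Fin K)
    (μ : Fin K → ℝ) (r : Fin T → Bool) : ℝ :=
  ∏ t : Fin T,
    if r t then μ (A t fun s => r ⟨s.1, s.2.trans t.2⟩)
    else 1 - μ (A t fun s => r ⟨s.1, s.2.trans t.2⟩)

/-- Problem instance `I_j(ε)`: arm `j` has mean reward `(1+ε)/2`, all other arms `1/2`. -/
noncomputable def instMu (K : ℕ) (j : Fin K) (ε : ℝ) : Fin K → ℝ :=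
  fun i => if i = j then (1 + ε) / 2 else 1 / 2

/-!
Compare each instance `I_a(ε)` with the instance in which every arm is a fair coin. There the
reward sequence is uniform on `{0,1}^T`, the prediction equals `a` with probability `p_a`, and arm
`a` is pulled `N_a` times in expectation, where `∑ p_a = 1` and `∑ N_a = T`. So all but at most one
arm have `p_a ≤ 1/2`, and, as `ε² T ≤ K/200`, at most a third of the arms have `ε² N_a > 3/200`.

For every other arm `a`, Jensen's inequality applied to the likelihood ratio, whose logarithm has
uniform mean `N_a log(1 - ε²)/4`, bounds the Bhattacharyya coefficient `∑ √(P Q)` of the two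
reward laws below by `1 - ε² N_a/3`; hence their total variation distance is at most
`√(8 ε² N_a/3) ≤ 1/5`, and under `I_a(ε)` the prediction equals `a` with probability at most
`1/2 + 1/5 < 3/4`.
-/

section TotalVariation

variable {ι : Type*} [Fintype ι]

lemma sum_le_sum_add_sum_abs_sub (s : Finset ι) (p q : ι → ℝ) :
    ∑ i ∈ s, p i ≤ ∑ i ∈ s, q i + ∑ i, |p i - q i| := by
  have hs : ∑ i ∈ s, (p i - q i) ≤ ∑ i, |p i - q i| :=
    (Finset.sum_le_sum fun i _ => le_abs_self _).trans
      (Finset.sum_le_sum_of_subset_of_nonneg s.subset_univ fun i _ _ => abs_nonneg _)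
  rw [Finset.sum_sub_distrib] at hs
  linarith

lemma sq_sum_abs_sub_le {p q : ι → ℝ} (hp : ∀ i, 0 ≤ p i) (hq : ∀ i, 0 ≤ q i)
    (hp1 : ∑ i, p i = 1) (hq1 : ∑ i, q i = 1) :
    (∑ i, |p i - q i|) ^ 2 ≤ 8 * (1 - ∑ i, √(p i * q i)) := by
  set B := ∑ i, √(p i * q i)
  have hsqrt_mul : ∀ i, √(p i * q i) = √(p i) * √(q i) := fun i => Real.sqrt_mul (hp i) _
  have hfactor : ∀ i, |p i - q i| = |√(p i) - √(q i)| * (√(p i) + √(q i)) := by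
    intro i
    rw [← Real.sq_sqrt (hp i), ← Real.sq_sqrt (hq i), sq_sub_sq, abs_mul, mul_comm,
      abs_of_nonneg (by positivity : 0 ≤ √(p i) + √(q i)), Real.sq_sqrt (hp i),
      Real.sq_sqrt (hq i)]
  have hminus : ∑ i, |√(p i) - √(q i)| ^ 2 = 2 - 2 * B := by
    have hterm : ∀ i, |√(p i) - √(q i)| ^ 2 = p i + q i - 2 * √(p i * q i) := by
      intro i
      rw [sq_abs, sub_sq, hsqrt_mul, Real.sq_sqrt (hp i), Real.sq_sqrt (hq i)]
      ring
    simp only [hterm, Finset.sum_sub_distrib, Finset.sum_add_distrib, ← Finset.mul_sum, hp1, hq1,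
      B]
    ring
  have hplus : ∑ i, (√(p i) + √(q i)) ^ 2 = 2 + 2 * B := by
    have hterm : ∀ i, (√(p i) + √(q i)) ^ 2 = p i + q i + 2 * √(p i * q i) := by
      intro i
      rw [add_sq, hsqrt_mul, Real.sq_sqrt (hp i), Real.sq_sqrt (hq i)]
      ring
    simp only [hterm, Finset.sum_add_distrib, ← Finset.mul_sum, hp1, hq1, B]
    ring
  calc (∑ i, |p i - q i|) ^ 2
      ≤ (∑ i, |√(p i) - √(q i)| ^ 2) * ∑ i, (√(p i) + √(q i)) ^ 2 := by
        simp only [hfactor]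
        exact Finset.sum_mul_sq_le_sq_mul_sq _ _ _
    _ = (2 - 2 * B) * (2 + 2 * B) := by rw [hminus, hplus]
    _ ≤ 8 * (1 - B) := by nlinarith [sq_nonneg (1 - B)]

end TotalVariation

lemma neg_four_thirds_mul_le_log_one_sub {x : ℝ} (hx0 : 0 ≤ x) (hx : x ≤ 1 / 4) :
    -(4 / 3 * x) ≤ Real.log (1 - x) := by
  have hpos : 0 < 1 - x := by linarith
  have hlog := Real.one_sub_inv_le_log_of_pos hpos
  have hinv : (1 - x)⁻¹ ≤ 1 + 4 / 3 * x := by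
    rw [inv_le_iff_one_le_mul₀ hpos]
    nlinarith
  linarith

lemma exists_ceil_third_le_card {K : ℕ} (hK : 2 ≤ K) {p q : Fin K → ℝ} (hp : ∀ a, 0 ≤ p a)
    (hp1 : ∑ a, p a = 1) (hq : ∀ a, 0 ≤ q a) (hqK : ∑ a, q a ≤ K) :
    ∃ S : Finset (Fin K), ⌈(K : ℝ) / 3⌉₊ ≤ S.card ∧ ∀ a ∈ S, p a ≤ 1 / 2 ∧ q a ≤ 3 := by
  set B₁ := Finset.univ.filter fun a => 1 / 2 < p a
  set B₂ := Finset.univ.filter fun a => 3 < q a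
  have hB₁ : B₁.card ≤ 1 := by
    refine Finset.card_le_one.2 fun a ha b hb => by_contra fun hab => ?_
    have hpair := Finset.sum_le_sum_of_subset_of_nonneg (Finset.subset_univ {a, b})
      fun i _ _ => hp i
    rw [Finset.sum_pair hab, hp1] at hpair
    linarith [(Finset.mem_filter.1 ha).2, (Finset.mem_filter.1 hb).2]
  have hB₂ : 3 * B₂.card ≤ K := by
    have hmarkov := Finset.card_nsmul_le_sum B₂ q 3 fun a ha => (Finset.mem_filter.1 ha).2.le
    have hsub := Finset.sum_le_sum_of_subset_of_nonneg B₂.subset_univ fun i _ _ => hq i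
    rw [nsmul_eq_mul] at hmarkov
    have hreal : (3 * B₂.card : ℝ) ≤ K := by linarith
    exact_mod_cast hreal
  set S := Finset.univ.filter fun a => p a ≤ 1 / 2 ∧ q a ≤ 3
  set R := Finset.univ.filter fun a => ¬(p a ≤ 1 / 2 ∧ q a ≤ 3)
  have hR : R.card ≤ B₁.card + B₂.card := by
    refine (Finset.card_le_card fun a ha => ?_).trans (Finset.card_union_le B₁ B₂)
    simp only [R, Finset.mem_filter, Finset.mem_univ, true_and, not_and_or, not_le] at ha
    simpa [Finset.mem_union, B₁, B₂] using ha
  have hsplit : S.card + R.card = K := by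
    rw [Finset.card_filter_add_card_filter_not, Finset.card_univ, Fintype.card_fin]
  refine ⟨S, Nat.ceil_le.2 ?_, fun a ha => (Finset.mem_filter.1 ha).2⟩
  rw [div_le_iff₀ (by norm_num)]
  exact_mod_cast (by omega : K ≤ S.card * 3)

namespace BestArm

variable {K T : ℕ}

def armAt (A : (t : Fin T) → (Fin t.1 → Bool) → Fin K) (r : Fin T → Bool) (t : Fin T) : Fin K :=
  A t fun s => r ⟨s.1, s.2.trans t.2⟩

def pullCount (A : (t : Fin T) → (Fin t.1 → Bool) → Fin K) (a : Fin K) (r : Fin T → Bool) : ℕ :=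
  (Finset.univ.filter fun t => armAt A r t = a).card

lemma seqProb_eq_prod (A : (t : Fin T) → (Fin t.1 → Bool) → Fin K) (μ : Fin K → ℝ)
    (r : Fin T → Bool) :
    seqProb A μ r = ∏ t, if r t then μ (armAt A r t) else 1 - μ (armAt A r t) := rfl

lemma armAt_snoc_castSucc (A : (t : Fin (T + 1)) → (Fin t.1 → Bool) → Fin K)
    (r : Fin T → Bool) (b : Bool) (t : Fin T) :
    armAt A (Fin.snoc r b) t.castSucc = armAt (fun t => A t.castSucc) r t := by
  unfold armAt
  congr 1
  funext s
  exact Fin.snoc_castSucc (α := fun _ => Bool) (i := ⟨s.1, s.2.trans t.2⟩) b r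

lemma armAt_snoc_last (A : (t : Fin (T + 1)) → (Fin t.1 → Bool) → Fin K)
    (r : Fin T → Bool) (b : Bool) :
    armAt A (Fin.snoc r b) (Fin.last T) = A (Fin.last T) r := by
  unfold armAt
  congr 1
  funext s
  exact Fin.snoc_castSucc (α := fun _ => Bool) (i := s) b r

lemma seqProb_snoc (A : (t : Fin (T + 1)) → (Fin t.1 → Bool) → Fin K) (μ : Fin K → ℝ)
    (r : Fin T → Bool) (b : Bool) :
    seqProb A μ (Fin.snoc r b) =
      seqProb (fun t => A t.castSucc) μ r *
        if b then μ (A (Fin.last T) r) else 1 - μ (A (Fin.last T) r) := by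
  simp only [seqProb_eq_prod, Fin.prod_univ_castSucc, Fin.snoc_last, Fin.snoc_castSucc,
    armAt_snoc_castSucc, armAt_snoc_last]

lemma sum_seqProb_eq_one (μ : Fin K → ℝ) :
    ∀ {T : ℕ} (A : (t : Fin T) → (Fin t.1 → Bool) → Fin K), ∑ r, seqProb A μ r = 1
  | 0, A => by simp [seqProb]
  | T + 1, A => by
    rw [← (Fin.snocEquiv fun _ => Bool).sum_comp, Fintype.sum_prod_type, Finset.sum_comm]
    change ∑ r, ∑ b, seqProb A μ (Fin.snoc r b) = 1
    simp only [seqProb_snoc, ← Finset.mul_sum, Fintype.sum_bool, if_true, Bool.false_eq_true,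
      if_false, add_sub_cancel, mul_one, sum_seqProb_eq_one μ]

lemma seqProb_nonneg (A : (t : Fin T) → (Fin t.1 → Bool) → Fin K) {μ : Fin K → ℝ}
    (hμ0 : ∀ k, 0 ≤ μ k) (hμ1 : ∀ k, μ k ≤ 1) (r : Fin T → Bool) : 0 ≤ seqProb A μ r := by
  rw [seqProb_eq_prod]
  exact Finset.prod_nonneg fun t _ => by
    split_ifs <;> linarith [hμ0 (armAt A r t), hμ1 (armAt A r t)]

lemma sum_inv_two_pow (T : ℕ) : ∑ _r : Fin T → Bool, (2⁻¹ : ℝ) ^ T = 1 := by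
  simp

lemma sum_pullCount (A : (t : Fin T) → (Fin t.1 → Bool) → Fin K) (r : Fin T → Bool) :
    ∑ a, pullCount A a r = T := by
  simp only [pullCount]
  rw [← Finset.card_eq_sum_card_fiberwise fun t _ => Finset.mem_univ (armAt A r t),
    Finset.card_univ, Fintype.card_fin]

lemma sum_mean_pullCount (A : (t : Fin T) → (Fin t.1 → Bool) → Fin K) :
    ∑ a, (2⁻¹ : ℝ) ^ T * ∑ r, (pullCount A a r : ℝ) = T := by
  rw [← Finset.mul_sum, Finset.sum_comm]
  simp only [← Nat.cast_sum, sum_pullCount, Finset.sum_const, Finset.card_univ, Fintype.card_fun,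
    Fintype.card_bool, Fintype.card_fin, nsmul_eq_mul]
  push_cast
  rw [← mul_assoc, ← mul_pow]
  norm_num

lemma armAt_update_self (A : (t : Fin T) → (Fin t.1 → Bool) → Fin K) (r : Fin T → Bool)
    (t : Fin T) (b : Bool) : armAt A (Function.update r t b) t = armAt A r t := by
  unfold armAt
  congr 1
  funext s
  exact Function.update_of_ne (Fin.ne_of_lt (show (⟨s.1, s.2.trans t.2⟩ : Fin T) < t from s.2)) ..

/-- Under uniformly random rewards, the reward of round `t` is independent of the arm pulled in
that round, which only sees earlier rewards. -/
lemma sum_armAt_eq_sum_avg (A : (t : Fin T) → (Fin t.1 → Bool) → Fin K) (t : Fin T)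
    (h : Fin K → Bool → ℝ) :
    ∑ r, h (armAt A r t) (r t) = ∑ r, (h (armAt A r t) true + h (armAt A r t) false) / 2 := by
  have hinv : Function.Involutive fun r : Fin T → Bool => Function.update r t (!r t) := by
    intro r
    simp
  have hflip : ∑ r, h (armAt A r t) (r t) = ∑ r, h (armAt A r t) (!r t) := by
    rw [← Equiv.sum_comp (hinv.toPerm _)]
    simp [armAt_update_self]
  have hpair : ∀ r : Fin T → Bool, h (armAt A r t) (r t) + h (armAt A r t) (!r t) =
      h (armAt A r t) true + h (armAt A r t) false := by
    intro r
    cases r t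
    · exact add_comm _ _
    · rfl
  rw [← Finset.sum_div, ← Finset.sum_congr rfl fun r _ => hpair r, Finset.sum_add_distrib,
    ← hflip]
  ring

lemma sum_sum_armAt_eq_sum_sum_avg (A : (t : Fin T) → (Fin t.1 → Bool) → Fin K)
    (h : Fin K → Bool → ℝ) :
    ∑ r, ∑ t, h (armAt A r t) (r t) =
      ∑ r, ∑ t, (h (armAt A r t) true + h (armAt A r t) false) / 2 := by
  rw [Finset.sum_comm, Finset.sum_comm (f := fun r t => _ / 2)]
  exact Finset.sum_congr rfl fun t _ => sum_armAt_eq_sum_avg A t h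

lemma one_add_le_sum_sqrt_seqProb_mul (A : (t : Fin T) → (Fin t.1 → Bool) → Fin K)
    {μ : Fin K → ℝ} (hμ0 : ∀ k, 0 < μ k) (hμ1 : ∀ k, μ k < 1) :
    1 + (2⁻¹ : ℝ) ^ T * ∑ r, ∑ t, Real.log (4 * μ (armAt A r t) * (1 - μ (armAt A r t))) / 4 ≤
      ∑ r, √(seqProb A μ r * (2⁻¹ : ℝ) ^ T) := by
  set U : ℝ := (2⁻¹ : ℝ) ^ T
  set h : Fin K → Bool → ℝ := fun k b => Real.log (2 * if b then μ k else 1 - μ k)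
  have hμ1' : ∀ k, 0 < 1 - μ k := fun k => sub_pos.2 (hμ1 k)
  have hseq : ∀ r, seqProb A μ r = U * Real.exp (∑ t, h (armAt A r t) (r t)) := by
    intro r
    have hfactor : ∀ k b, (if b then μ k else 1 - μ k) = 2⁻¹ * Real.exp (h k b) := by
      intro k b
      rw [Real.exp_log (by cases b <;> simp [hμ0, hμ1'])]
      ring
    simp only [seqProb_eq_prod, hfactor, Finset.prod_mul_distrib, Finset.prod_const,
      Finset.card_univ, Fintype.card_fin, Real.exp_sum, U]
  have hsqrt : ∀ r, √(seqProb A μ r * U) = U * Real.exp ((∑ t, h (armAt A r t) (r t)) / 2) := by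
    intro r
    have hsq : U * Real.exp (∑ t, h (armAt A r t) (r t)) * U =
        (U * Real.exp ((∑ t, h (armAt A r t) (r t)) / 2)) ^ 2 := by
      rw [mul_pow, sq (Real.exp _), ← Real.exp_add, add_halves]
      ring
    rw [hseq, hsq, Real.sqrt_sq (by positivity)]
  have hpair : ∀ k, (h k true + h k false) / 2 / 2 = Real.log (4 * μ k * (1 - μ k)) / 4 := by
    intro k
    simp only [h, if_true, Bool.false_eq_true, if_false]
    rw [← Real.log_mul (by linarith [hμ0 k]) (by linarith [hμ1' k])]
    ring_nf
  have hjensen := convexOn_exp.map_sum_le (t := Finset.univ) (w := fun _ => U)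
    (p := fun r : Fin T → Bool => (∑ t, h (armAt A r t) (r t)) / 2)
    (fun _ _ => by positivity) (by simp [U]) (fun _ _ => Set.mem_univ _)
  simp only [smul_eq_mul] at hjensen
  calc 1 + U * ∑ r, ∑ t, Real.log (4 * μ (armAt A r t) * (1 - μ (armAt A r t))) / 4
      = 1 + ∑ r, U * ((∑ t, h (armAt A r t) (r t)) / 2) := by
        rw [← Finset.mul_sum, ← Finset.sum_div, sum_sum_armAt_eq_sum_sum_avg]
        simp only [Finset.sum_div, hpair]
    _ ≤ Real.exp (∑ r, U * ((∑ t, h (armAt A r t) (r t)) / 2)) := by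
        linarith [Real.add_one_le_exp (∑ r, U * ((∑ t, h (armAt A r t) (r t)) / 2))]
    _ ≤ ∑ r, √(seqProb A μ r * U) := by simpa only [hsqrt] using hjensen

lemma log_four_mul_instMu_mul_one_sub (a k : Fin K) (ε : ℝ) :
    Real.log (4 * instMu K a ε k * (1 - instMu K a ε k)) =
      if k = a then Real.log (1 - ε ^ 2) else 0 := by
  unfold instMu
  split_ifs
  · ring_nf
  · norm_num

lemma sum_seqProb_instMu_le (A : (t : Fin T) → (Fin t.1 → Bool) → Fin K)
    (E : Finset (Fin T → Bool)) (a : Fin K) {ε : ℝ} (hε0 : 0 ≤ ε) (hε : ε ≤ 1 / 2) :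
    ∑ r ∈ E, seqProb A (instMu K a ε) r ≤
      ∑ _r ∈ E, (2⁻¹ : ℝ) ^ T +
        √(8 / 3 * ε ^ 2 * ((2⁻¹ : ℝ) ^ T * ∑ r, (pullCount A a r : ℝ))) := by
  set U : ℝ := (2⁻¹ : ℝ) ^ T
  set N : ℝ := U * ∑ r, (pullCount A a r : ℝ)
  have hμ0 : ∀ k, 0 < instMu K a ε k := fun k => by unfold instMu; split_ifs <;> linarith
  have hμ1 : ∀ k, instMu K a ε k < 1 := fun k => by unfold instMu; split_ifs <;> linarith
  have hround : ∀ r, ∑ t, Real.log (4 * instMu K a ε (armAt A r t) *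
      (1 - instMu K a ε (armAt A r t))) / 4 = Real.log (1 - ε ^ 2) / 4 * pullCount A a r := by
    intro r
    simp only [log_four_mul_instMu_mul_one_sub, ← Finset.sum_div, Finset.sum_ite,
      Finset.sum_const, nsmul_eq_mul, pullCount]
    ring
  have hlog := neg_four_thirds_mul_le_log_one_sub (sq_nonneg ε) (by nlinarith)
  have haffinity : 1 - ε ^ 2 / 3 * N ≤ ∑ r, √(seqProb A (instMu K a ε) r * U) := by
    refine le_trans ?_ (one_add_le_sum_sqrt_seqProb_mul A hμ0 hμ1)
    simp only [hround, N, Finset.mul_sum]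
    rw [sub_eq_add_neg, ← Finset.sum_neg_distrib]
    gcongr with r
    change _ ≤ U * _
    have hUn : 0 ≤ U * pullCount A a r := by positivity
    linarith [mul_le_mul_of_nonneg_right hlog hUn]
  have htv := sq_sum_abs_sub_le (seqProb_nonneg A (fun k => (hμ0 k).le) (fun k => (hμ1 k).le))
    (fun _ => by positivity : ∀ _, 0 ≤ U) (sum_seqProb_eq_one _ A) (sum_inv_two_pow T)
  calc ∑ r ∈ E, seqProb A (instMu K a ε) r
      ≤ ∑ _r ∈ E, U + ∑ r, |seqProb A (instMu K a ε) r - U| := sum_le_sum_add_sum_abs_sub _ _ _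
    _ ≤ ∑ _r ∈ E, U + √(8 / 3 * ε ^ 2 * N) := by
        gcongr
        exact Real.le_sqrt_of_sq_le (by linarith)

end BestArm

/-- **Lower bound for best-arm identification.**
There is an absolute constant `c > 0` such that for every `K ≥ 2`, `ε ∈ (0,1/2)`,
time horizon `T ≤ cK/ε²`, and deterministic bandit algorithm with prediction `(A, y)`,
there exist at least `⌈K/3⌉` arms `a` such that, under instance `I_a(ε)`,
`Pr[y(r₁,…,r_T) = a] < 3/4`. -/
theorem bestarm_identification_lower_bound :
    ∃ c > (0 : ℝ), ∀ (K T : ℕ), 2 ≤ K → ∀ ε : ℝ, 0 < ε → ε < 1 / 2 →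
      (T : ℝ) ≤ c * K / ε ^ 2 →
      ∀ (A : (t : Fin T) → (Fin t.1 → Bool) → Fin K) (y : (Fin T → Bool) → Fin K),
        ∃ S : Finset (Fin K), ⌈(K : ℝ) / 3⌉₊ ≤ S.card ∧
          ∀ a ∈ S,
            (∑ r ∈ Finset.univ.filter (fun r : Fin T → Bool => y r = a),
              seqProb A (instMu K a ε) r) < 3 / 4 := by
  refine ⟨1 / 200, by norm_num, fun K T hK ε hε0 hε hT A y => ?_⟩
  set U : ℝ := (2⁻¹ : ℝ) ^ T
  set N : Fin K → ℝ := fun a => U * ∑ r, (BestArm.pullCount A a r : ℝ)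
  have hN : ∑ a, 200 * ε ^ 2 * N a ≤ (K : ℝ) := by
    rw [← Finset.mul_sum, BestArm.sum_mean_pullCount]
    rw [le_div_iff₀ (by positivity)] at hT
    linarith
  obtain ⟨S, hS, hsmall⟩ := exists_ceil_third_le_card hK
    (p := fun a => ∑ _r ∈ Finset.univ.filter (fun r => y r = a), U) (fun a => by positivity)
    (by rw [Finset.sum_fiberwise, BestArm.sum_inv_two_pow]) (fun a => by positivity) hN
  refine ⟨S, hS, fun a ha => ?_⟩
  obtain ⟨hpa, hqa⟩ := hsmall a ha
  calc _ ≤ ∑ _r ∈ Finset.univ.filter (fun r => y r = a), U + √(8 / 3 * ε ^ 2 * N a) :=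
        BestArm.sum_seqProb_instMu_le A _ a hε0.le hε.le
    _ ≤ 1 / 2 + 1 / 5 := add_le_add hpa (Real.sqrt_le_iff.2 ⟨by norm_num, by linarith⟩)
    _ < 3 / 4 := by norm_num
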